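/- In a second-price sealed-bid auction, bidding one's true valuation is a weakly dominant strategy: for any bidder i with true valuation α_i, any profile of other bids, and any alternative bid λ'_i ≠ α_i, the utility from bidding α_i is at least the utility from bidding λ'_i. -/
import Mathlib


/-- Bidder `i` wins iff its bid is highest, with ties broken in favour of the
lowest index. -/
def Wins {n : ℕ} (b : Fin n → ℝ) (i : Fin n) : Prop :=
  ∀ j : Fin n, b j < b i ∨ (b j = b i ∧ i ≤ j)

/-- The second-price payment: the highest bid among the bidders other than `i`. -/
noncomputable def SecondPrice {n : ℕ} (hn : 2 ≤ n) (i : Fin n) (b : Fin n → ℝ) : ℝ :=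
  (Finset.univ.erase i).sup'
    ((Finset.erase_nonempty (Finset.mem_univ i)).mpr
      (Finset.one_lt_card_iff_nontrivial.mp
        (by rw [Finset.card_univ, Fintype.card_fin]; omega))) b

/-- Utility of bidder `i` with true valuation `α i` under bid profile `b`:
if `i` wins it gets `α i` minus the highest other bid, otherwise `0`. -/
noncomputable def Utility {n : ℕ} (hn : 2 ≤ n) (α b : Fin n → ℝ) (i : Fin n) : ℝ :=
  open Classical in
  if Wins b i then α i - SecondPrice hn i b else 0

/-- In a second-price sealed-bid auction, bidding one's true valuation is a
weakly dominant strategy. -/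
theorem truthful_weakly_dominant {n : ℕ} (hn : 2 ≤ n) (α : Fin n → ℝ)
    (b : Fin n → ℝ) (i : Fin n) (l' : ℝ) (hne : l' ≠ α i) :
    Utility hn α (Function.update b i l') i ≤
      Utility hn α (Function.update b i (α i)) i := by
  classical
  have hsp : ∀ x : ℝ, SecondPrice hn i (Function.update b i x) = SecondPrice hn i b := by
    intro x
    apply Finset.sup'_congr _ rfl
    intro j hj
    rw [Function.update_of_ne (Finset.ne_of_mem_erase hj)]
  set p := SecondPrice hn i b with hp
  unfold Utility
  split_ifs with h1 h2 h2
  · rw [hsp, hsp]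
  · -- l' wins, truth loses: α i - p ≤ 0
    rw [hsp]
    simp only [Wins, not_forall] at h2
    obtain ⟨j, hj⟩ := h2
    have hji : j ≠ i := by
      rintro rfl
      exact hj (Or.inr ⟨rfl, le_refl _⟩)
    push_neg at hj
    rw [Function.update_of_ne hji, Function.update_self] at hj
    have h1 : α i ≤ b j := hj.1
    have h2 : b j ≤ p := Finset.le_sup' b (Finset.mem_erase.mpr ⟨hji, Finset.mem_univ j⟩)
    linarith
  · -- truth wins: 0 ≤ α i - p
    rw [hsp]
    have hle : p ≤ α i := by
      apply Finset.sup'_le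
      intro j hj
      have hji := Finset.ne_of_mem_erase hj
      rcases h2 j with h | h
      · rw [Function.update_of_ne hji, Function.update_self] at h
        exact h.le
      · rw [Function.update_of_ne hji, Function.update_self] at h
        exact h.1.le
    linarith
  · exact le_refl 0
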